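/- arXiv:1901.11272 — 4 statements merged into one kernel-verified Lean document; each statement's English description precedes it below -/
import Mathlib

section
/- Let X ⊆ ℝⁿ be a rectangular domain (a Cartesian product of real intervals), G : X → ℝʳ, and let D be an r × n matrix of non-empty subsets of ℝ. Then G is Q(D)-affine if and only if G is component-wise D-affine. -/
/-- The qualitative class `Q(D)` of a matrix `D` of subsets of `ℝ`. -/
def Qual {n r : ℕ} (D : Matrix (Fin r) (Fin n) (Set ℝ)) : Set (Matrix (Fin r) (Fin n) ℝ) :=
  {B | ∀ i j, B i j ∈ D i j}

/-- `G : X → ℝʳ` is `ℬ`-affine. -/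
def IsAffine {n r : ℕ} (X : Set (Fin n → ℝ)) (ℬ : Set (Matrix (Fin r) (Fin n) ℝ))
    (G : (Fin n → ℝ) → (Fin r → ℝ)) : Prop :=
  ∀ x ∈ X, ∀ y ∈ X, ∃ B ∈ ℬ, G x - G y = B.mulVec (x - y)

/-- `G : X → ℝʳ` is component-wise `D`-affine. -/
def CompAffine {n r : ℕ} (X : Set (Fin n → ℝ)) (D : Matrix (Fin r) (Fin n) (Set ℝ))
    (G : (Fin n → ℝ) → (Fin r → ℝ)) : Prop :=
  ∀ i j, ∀ x ∈ X, ∀ y ∈ X, (∀ j', j' ≠ j → x j' = y j') →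
    ∃ b ∈ D i j, G x i - G y i = b * (x j - y j)

/-- `X ⊆ ℝⁿ` is a rectangular domain: a Cartesian product of real intervals. -/
def Rectangular {n : ℕ} (X : Set (Fin n → ℝ)) : Prop :=
  ∃ I : Fin n → Set ℝ, (∀ j, (I j).OrdConnected) ∧ X = Set.pi Set.univ I

/-- On a rectangular domain, `G` is `Q(D)`-affine iff `G` is component-wise `D`-affine
(`D` a matrix of non-empty subsets of `ℝ`). -/
theorem stmt8 {n r : ℕ} (X : Set (Fin n → ℝ)) (hX : Rectangular X)
    (G : (Fin n → ℝ) → (Fin r → ℝ)) (D : Matrix (Fin r) (Fin n) (Set ℝ))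
    (hD : ∀ i j, (D i j).Nonempty) :
    IsAffine X (Qual D) G ↔ CompAffine X D G := by
  obtain ⟨I, hI, rfl⟩ := hX
  constructor
  · intro hA i j x hx y hy hxy
    obtain ⟨B, hB, heq⟩ := hA x hx y hy
    refine ⟨B i j, hB i j, ?_⟩
    have hth := congrFun heq i
    simp only [Pi.sub_apply, Matrix.mulVec, dotProduct] at hth
    rw [hth, Finset.sum_eq_single j]
    · intro j' _ hj'
      rw [hxy j' hj']; ring
    · simp
  · intro h x hx y hy
    set z : ℕ → Fin n → ℝ := fun k j => if (j : ℕ) < k then x j else y j with hzdef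
    have hz : ∀ k, z k ∈ Set.pi Set.univ I := by
      intro k j _
      by_cases hc : (j : ℕ) < k
      · simpa [hzdef, hc] using hx j trivial
      · simpa [hzdef, hc] using hy j trivial
    have hstep : ∀ (i : Fin r) (k : Fin n),
        ∃ b ∈ D i k, G (z ((k : ℕ) + 1)) i - G (z (k : ℕ)) i = b * (x k - y k) := by
      intro i k
      have hdiff : ∀ j', j' ≠ k → z ((k : ℕ) + 1) j' = z (k : ℕ) j' := by
        intro j' hj'
        have hne : (j' : ℕ) ≠ (k : ℕ) := fun hh => hj' (Fin.ext hh)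
        simp only [hzdef]
        by_cases hc : (j' : ℕ) < (k : ℕ)
        · simp [hc, Nat.lt_succ_of_lt hc]
        · have hc2 : ¬ (j' : ℕ) < (k : ℕ) + 1 := by omega
          simp [hc, hc2]
      obtain ⟨b, hb, he⟩ := h i k (z ((k : ℕ) + 1)) (hz _) (z (k : ℕ)) (hz _) hdiff
      refine ⟨b, hb, ?_⟩
      rw [he]
      have h1 : z ((k : ℕ) + 1) k = x k := by simp [hzdef]
      have h2 : z (k : ℕ) k = y k := by simp [hzdef]
      rw [h1, h2]
    choose B hBmem hBeq using hstep
    refine ⟨B, hBmem, ?_⟩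
    have hz0 : z 0 = y := by funext j; simp [hzdef]
    have hzn : z n = x := by funext j; simp [hzdef, j.isLt]
    funext i
    have tele : ∀ m : ℕ, m ≤ n → G (z m) i - G (z 0) i
        = ∑ k ∈ Finset.range m, (G (z (k+1)) i - G (z k) i) := by
      intro m hm
      induction m with
      | zero => simp
      | succ p ih =>
        rw [Finset.sum_range_succ, ← ih (Nat.le_of_succ_le hm)]
        ring
    have htel := tele n le_rfl
    rw [hz0, hzn] at htel
    set f : ℕ → ℝ := fun k =>
      if hk : k < n then B i ⟨k, hk⟩ * (x ⟨k, hk⟩ - y ⟨k, hk⟩) else 0 with hfdef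
    simp only [Pi.sub_apply, Matrix.mulVec, dotProduct]
    have h1 : ∀ j' : Fin n, B i j' * (x j' - y j') = f (j' : ℕ) := by
      intro j'
      simp [hfdef, j'.isLt]
    calc G x i - G y i
        = ∑ k ∈ Finset.range n, (G (z (k+1)) i - G (z k) i) := htel
      _ = ∑ k ∈ Finset.range n, f k := by
          refine Finset.sum_congr rfl fun k hk => ?_
          have hkn : k < n := Finset.mem_range.mp hk
          have := hBeq i ⟨k, hkn⟩
          simp only [Fin.val_mk] at this
          rw [this]
          simp [hfdef, hkn]
      _ = ∑ j' : Fin n, f (j' : ℕ) := (Fin.sum_univ_eq_sum_range f n).symm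
      _ = ∑ j' : Fin n, B i j' * (x j' - y j') := by
          exact Finset.sum_congr rfl fun j' _ => (h1 j').symm
end

section
/- Let X ⊆ ℝⁿ be connected by rectangular, oriented paths, G : X → ℝʳ, and let D be an r × n matrix of intervals of ℝ. Then G is Q(D)-affine if and only if G is component-wise D-affine. -/
/-- `X` is connected by rectangular, oriented paths: any `x, y ∈ X` are joined by a finite
sequence in `X` starting at `y` and ending at `x` whose successive elements differ in
exactly one component and whose successive differences have componentwise sign `≤` the
sign of `x - y` (with `0 < -` and `0 < +`). -/
def RectOrientedConnected {n : ℕ} (X : Set (Fin n → ℝ)) : Prop :=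
  ∀ x ∈ X, ∀ y ∈ X, ∃ N : ℕ, ∃ z : Fin (N + 1) → (Fin n → ℝ),
    z 0 = y ∧ z (Fin.last N) = x ∧ (∀ k, z k ∈ X) ∧
    (∀ k : Fin N, ∃ j, z k.succ j ≠ z k.castSucc j ∧
      ∀ j', j' ≠ j → z k.succ j' = z k.castSucc j') ∧
    (∀ k : Fin N, ∀ j, z k.succ j - z k.castSucc j = 0 ∨
      SignType.sign (z k.succ j - z k.castSucc j) = SignType.sign (x j - y j))

/-!
Along a rectangular path from `y` to `x` each step `Δₖ = zᵏ - zᵏ⁻¹` changes a single coordinate,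
so component-wise affinity gives `G zᵏ - G zᵏ⁻¹ = Bₖ Δₖ` with `(Bₖ)ᵢⱼ ∈ Dᵢⱼ` wherever `Δₖⱼ ≠ 0`.
Telescoping, `G x - G y = ∑ₖ Bₖ Δₖ`. Since the path is oriented, for each `j` all `Δₖⱼ` have the
sign of `xⱼ - yⱼ = ∑ₖ Δₖⱼ`, so `∑ₖ (Bₖ)ᵢⱼ Δₖⱼ = bᵢⱼ (xⱼ - yⱼ)` with `bᵢⱼ` a convex combination of
elements of the interval `Dᵢⱼ`.
-/

open Finset Matrix

theorem Fin.sum_univ_succ_sub_castSucc {M : Type*} [AddCommGroup M] {N : ℕ}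
    (g : Fin (N + 1) → M) : ∑ k : Fin N, (g k.succ - g k.castSucc) = g (Fin.last N) - g 0 := by
  induction N with
  | zero => simp
  | succ N ih =>
    have h := ih fun m => g m.castSucc
    simp only [← Fin.succ_castSucc] at h
    rw [Fin.sum_univ_castSucc, h, Fin.succ_last, Fin.castSucc_zero]
    abel

theorem div_nonneg_of_sign_eq {a c : ℝ} (h : SignType.sign a = SignType.sign c) : 0 ≤ a / c := by
  rw [div_nonneg_iff, ← mul_nonneg_iff, ← sign_nonneg_iff, sign_mul, h]
  rcases SignType.sign c with _ | _ | _ <;> decide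

section
variable {S : Set ℝ} {ι : Type*} (t : Finset ι) {δ b : ι → ℝ} {c : ℝ}

theorem Convex.sum_mul_div_mem (hS : Convex ℝ S) (hc : c ≠ 0) (hsum : ∑ k ∈ t, δ k = c)
    (hsign : ∀ k ∈ t, δ k = 0 ∨ SignType.sign (δ k) = SignType.sign c)
    (hb : ∀ k ∈ t, δ k ≠ 0 → b k ∈ S) :
    (∑ k ∈ t, b k * δ k) / c ∈ S := by
  classical
  -- a convex combination of the `b k` with `δ k ≠ 0`, with weights `δ k / c`
  set s := t.filter (δ · ≠ 0)
  have hs {f : ι → ℝ} (hf : ∀ k, δ k = 0 → f k = 0) : ∑ k ∈ s, f k = ∑ k ∈ t, f k :=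
    sum_filter_of_ne fun k _ hfk hδ => hfk (hf k hδ)
  have hmem := hS.sum_mem (t := s) (w := fun k => δ k / c) (z := b)
    (fun k hk => div_nonneg_of_sign_eq ((hsign k (mem_filter.1 hk).1).resolve_left
      (mem_filter.1 hk).2))
    (by rw [hs fun k hk => by simp [hk], ← sum_div, hsum, div_self hc])
    (fun k hk => hb k (mem_filter.1 hk).1 (mem_filter.1 hk).2)
  convert hmem using 1
  rw [hs fun k hk => by simp [hk], sum_div]
  exact sum_congr rfl fun k _ => by rw [smul_eq_mul]; ring

theorem Convex.exists_mem_sum_mul_eq_mul (hS : Convex ℝ S) (hS₀ : S.Nonempty)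
    (hsum : ∑ k ∈ t, δ k = c)
    (hsign : ∀ k ∈ t, δ k = 0 ∨ SignType.sign (δ k) = SignType.sign c)
    (hb : ∀ k ∈ t, δ k ≠ 0 → b k ∈ S) :
    ∃ β ∈ S, ∑ k ∈ t, b k * δ k = β * c := by
  rcases eq_or_ne c 0 with rfl | hc
  · have hδ : ∀ k ∈ t, δ k = 0 := fun k hk =>
      (hsign k hk).elim id fun h => sign_eq_zero_iff.mp (h.trans sign_zero)
    obtain ⟨β, hβ⟩ := hS₀
    exact ⟨β, hβ, by simpa using sum_eq_zero fun k hk => by simp [hδ k hk]⟩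
  · exact ⟨_, hS.sum_mul_div_mem t hc hsum hsign hb, (div_mul_cancel₀ _ hc).symm⟩

end

theorem sub_eq_single_of_forall_ne {n : ℕ} {x y : Fin n → ℝ} {j : Fin n}
    (hxy : ∀ j', j' ≠ j → x j' = y j') : x - y = Pi.single j (x j - y j) := by
  ext j'
  rcases eq_or_ne j' j with rfl | hj'
  · simp
  · simp [hxy j' hj', hj']

theorem exists_mem_qual_sum_mulVec_eq {r n : ℕ} {D : Matrix (Fin r) (Fin n) (Set ℝ)}
    (hD : ∀ i j, Convex ℝ (D i j)) (hD₀ : ∀ i j, (D i j).Nonempty) {ι : Type*} (t : Finset ι)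
    {B : ι → Matrix (Fin r) (Fin n) ℝ} {Δ : ι → Fin n → ℝ}
    (hsign : ∀ k ∈ t, ∀ j,
      Δ k j = 0 ∨ SignType.sign (Δ k j) = SignType.sign ((∑ k ∈ t, Δ k) j))
    (hB : ∀ k ∈ t, ∀ i j, Δ k j ≠ 0 → B k i j ∈ D i j) :
    ∃ B' ∈ Qual D, ∑ k ∈ t, B k *ᵥ Δ k = B' *ᵥ ∑ k ∈ t, Δ k := by
  choose B' hB' hsum using fun i j =>
    (hD i j).exists_mem_sum_mul_eq_mul t (hD₀ i j) (δ := fun k => Δ k j)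
      (b := fun k => B k i j) (Finset.sum_apply j t Δ).symm (fun k hk => hsign k hk j)
      (fun k hk => hB k hk i j)
  refine ⟨Matrix.of B', hB', funext fun i => ?_⟩
  rw [Finset.sum_apply]
  simp only [mulVec, dotProduct]
  rw [sum_comm]
  exact sum_congr rfl fun j _ => hsum i j

section
variable {n r : ℕ} {X : Set (Fin n → ℝ)} {D : Matrix (Fin r) (Fin n) (Set ℝ)}
  {G : (Fin n → ℝ) → (Fin r → ℝ)}

theorem IsAffine.compAffine (h : IsAffine X (Qual D) G) : CompAffine X D G := by
  intro i j x hx y hy hxy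
  obtain ⟨B, hB, hG⟩ := h x hx y hy
  refine ⟨B i j, hB i j, ?_⟩
  rw [← Pi.sub_apply, hG, sub_eq_single_of_forall_ne hxy]
  exact dotProduct_single (v := B i) _ _

theorem CompAffine.exists_mulVec_of_forall_ne (h : CompAffine X D G) {x y : Fin n → ℝ}
    (hx : x ∈ X) (hy : y ∈ X) {j₀ : Fin n} (hxy : ∀ j, j ≠ j₀ → x j = y j) :
    ∃ B : Matrix (Fin r) (Fin n) ℝ,
      (∀ i j, x j - y j ≠ 0 → B i j ∈ D i j) ∧ G x - G y = B *ᵥ (x - y) := by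
  choose b hb hG using fun i => h i j₀ x hx y hy hxy
  refine ⟨Matrix.of fun i _ => b i, fun i j hj => ?_, funext fun i => ?_⟩
  · obtain rfl : j = j₀ := by_contra fun hne => hj (sub_eq_zero.2 (hxy j hne))
    exact hb i
  · rw [Pi.sub_apply, hG i, sub_eq_single_of_forall_ne hxy]
    exact (dotProduct_single (v := fun _ => b i) _ _).symm

theorem CompAffine.isAffine (hX : RectOrientedConnected X) (hD : ∀ i j, Convex ℝ (D i j))
    (h : CompAffine X D G) : IsAffine X (Qual D) G := by
  intro x hx y hy
  obtain ⟨N, z, rfl, rfl, hzX, hrect, horient⟩ := hX x hx y hy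
  choose j₀ _ hj₀ using hrect
  choose B hB hG using fun k =>
    h.exists_mulVec_of_forall_ne (hzX k.succ) (hzX k.castSucc) (hj₀ k)
  have hD₀ : ∀ i j, (D i j).Nonempty := fun i j =>
    (h i j _ (hzX 0) _ (hzX 0) fun _ _ => rfl).imp fun _ => And.left
  have hΔ := Fin.sum_univ_succ_sub_castSucc z
  obtain ⟨B', hB', hB'eq⟩ := exists_mem_qual_sum_mulVec_eq hD hD₀ univ
    (Δ := fun k => z k.succ - z k.castSucc) (fun k _ j => by rw [hΔ]; exact horient k j)
    (fun k _ i j => hB k i j)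
  refine ⟨B', hB', ?_⟩
  calc G (z (Fin.last N)) - G (z 0)
      = ∑ k : Fin N, (G (z k.succ) - G (z k.castSucc)) :=
        (Fin.sum_univ_succ_sub_castSucc (G ∘ z)).symm
    _ = ∑ k : Fin N, B k *ᵥ (z k.succ - z k.castSucc) := sum_congr rfl fun k _ => hG k
    _ = B' *ᵥ (z (Fin.last N) - z 0) := by rw [hB'eq, hΔ]

end

/-- On a domain connected by rectangular, oriented paths, for a matrix `D` of intervals
(convex subsets of `ℝ`), `G` is `Q(D)`-affine iff `G` is component-wise `D`-affine. -/
theorem stmt9 {n r : ℕ} (X : Set (Fin n → ℝ)) (hX : RectOrientedConnected X)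
    (G : (Fin n → ℝ) → (Fin r → ℝ)) (D : Matrix (Fin r) (Fin n) (Set ℝ))
    (hD : ∀ i j, Convex ℝ (D i j)) :
    IsAffine X (Qual D) G ↔ CompAffine X D G :=
  ⟨IsAffine.compAffine, CompAffine.isAffine hX hD⟩
end

section
/- Let X, S ⊆ ℝⁿ with S a linear subspace, let D be an r × n matrix of non-empty subsets of ℝ, and let ℳ(D) be the set of component-wise D-affine maps X → ℝʳ. If X is rectangular, or if X is connected by rectangular, oriented paths and every entry of D is an interval, then: ℳ(D) is Q(D)-affine, every matrix of Q(D) restricted to X belongs to ℳ(D), Δ_S ℳ(D) = Q(D)(dX ∩ S), and the following are equivalent: (i) ℳ(D) is injective with respect to S; (ii) 0 ∉ Q(D)(dX ∩ S). -/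
/-- `dX = {x - y : x, y ∈ X, x ≠ y}`. -/
def dSet {n : ℕ} (X : Set (Fin n → ℝ)) : Set (Fin n → ℝ) :=
  {z | ∃ x ∈ X, ∃ y ∈ X, x ≠ y ∧ z = x - y}

/-- `Δ_S 𝒢 = {G x - G y : G ∈ 𝒢, x, y ∈ X, x - y ∈ S \ {0}}`. -/
def DeltaS {n r : ℕ} (X : Set (Fin n → ℝ)) (S : Submodule ℝ (Fin n → ℝ))
    (𝒢 : Set ((Fin n → ℝ) → (Fin r → ℝ))) : Set (Fin r → ℝ) :=
  {w | ∃ G ∈ 𝒢, ∃ x ∈ X, ∃ y ∈ X, x - y ∈ S ∧ x - y ≠ 0 ∧ w = G x - G y}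

/-- `ℬ(T) = {B z : B ∈ ℬ, z ∈ T}`. -/
def matImage {n r : ℕ} (ℬ : Set (Matrix (Fin r) (Fin n) ℝ)) (T : Set (Fin n → ℝ)) :
    Set (Fin r → ℝ) :=
  {w | ∃ B ∈ ℬ, ∃ z ∈ T, w = B.mulVec z}

/-- `𝒢` is injective with respect to `S`. -/
def InjOnCosets {n r : ℕ} (X : Set (Fin n → ℝ)) (S : Submodule ℝ (Fin n → ℝ))
    (𝒢 : Set ((Fin n → ℝ) → (Fin r → ℝ))) : Prop :=
  ∀ G ∈ 𝒢, ∀ x₀ ∈ X, Set.InjOn G ({z | z - x₀ ∈ S} ∩ X)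

lemma fin_telescope {N : ℕ} (f : Fin (N + 1) → ℝ) :
    ∑ k : Fin N, (f k.succ - f k.castSucc) = f (Fin.last N) - f 0 := by
  induction N with
  | zero => simp
  | succ N ih =>
    rw [Fin.sum_univ_castSucc]
    have h := ih (fun k => f k.castSucc)
    have e : ∑ k : Fin N, (f k.castSucc.succ - f k.castSucc.castSucc)
        = f ((Fin.last N).castSucc) - f 0 := by
      calc ∑ k : Fin N, (f k.castSucc.succ - f k.castSucc.castSucc)
          = ∑ k : Fin N, (f k.succ.castSucc - f k.castSucc.castSucc) := by
            apply Finset.sum_congr rfl; intro k _; rw [Fin.succ_castSucc]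
        _ = f ((Fin.last N).castSucc) - f 0 := h
    rw [e, Fin.succ_last]
    ring

/-- the standard rectangular path from `y` to `x` -/
def rpath {n : ℕ} (x y : Fin n → ℝ) (k : Fin (n + 1)) (j : Fin n) : ℝ :=
  if (j : ℕ) < (k : ℕ) then x j else y j

lemma rpath_zero {n : ℕ} (x y : Fin n → ℝ) : rpath x y 0 = y := by
  funext j; simp [rpath]

lemma rpath_last {n : ℕ} (x y : Fin n → ℝ) : rpath x y (Fin.last n) = x := by
  funext j; simp [rpath, Fin.val_last, j.isLt]

lemma rpath_step {n : ℕ} (x y : Fin n → ℝ) (k : Fin n) (j' : Fin n) (hj' : j' ≠ k) :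
    rpath x y k.succ j' = rpath x y k.castSucc j' := by
  have hne : (j' : ℕ) ≠ (k : ℕ) := fun h => hj' (Fin.ext h)
  unfold rpath
  by_cases h : (j' : ℕ) < ((k.castSucc : Fin (n+1)) : ℕ)
  · rw [if_pos, if_pos h]
    rw [Fin.val_succ]; rw [Fin.coe_castSucc] at h; omega
  · rw [if_neg, if_neg h]
    rw [Fin.val_succ]; rw [Fin.coe_castSucc] at h; omega
lemma rpath_succ_self {n : ℕ} (x y : Fin n → ℝ) (k : Fin n) :
    rpath x y k.succ k = x k := by
  unfold rpath
  rw [if_pos]; rw [Fin.val_succ]; omega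

lemma rpath_castSucc_self {n : ℕ} (x y : Fin n → ℝ) (k : Fin n) :
    rpath x y k.castSucc k = y k := by
  unfold rpath
  rw [if_neg]; rw [Fin.coe_castSucc]; omega

/-- aggregation of same-signed steps -/
lemma agg {N : ℕ} (s : Set ℝ) (hs : s.Nonempty) (b δ : Fin N → ℝ)
    (hb : ∀ k, δ k ≠ 0 → b k ∈ s) (t : ℝ) (ht : ∑ k, δ k = t)
    (hsign : ∀ k, δ k = 0 ∨ SignType.sign (δ k) = SignType.sign t)
    (hcase : Convex ℝ s ∨ ∀ k l, δ k ≠ 0 → δ l ≠ 0 → k = l) :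
    ∃ B ∈ s, ∑ k, b k * δ k = B * t := by
  by_cases h0 : t = 0
  · subst h0
    have hδ : ∀ k, δ k = 0 := by
      intro k
      rcases hsign k with h | h
      · exact h
      · simpa using h
    obtain ⟨B, hB⟩ := hs
    exact ⟨B, hB, by simp [hδ]⟩
  rcases hcase with hconv | huniq
  · -- convex case
    obtain ⟨c, hc⟩ := hs
    set b' : Fin N → ℝ := fun k => if δ k = 0 then c else b k with hb'
    have hb's : ∀ k, b' k ∈ s := by
      intro k; rw [hb']; dsimp only; split_ifs with h
      exacts [hc, hb k h]
    have hw : ∀ k, 0 ≤ δ k / t := by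
      intro k
      rcases hsign k with h | h
      · simp [h]
      rcases lt_trichotomy t 0 with hlt | he | hgt
      · rw [sign_eq_neg_one_iff.mpr hlt] at h
        have : δ k < 0 := sign_eq_neg_one_iff.mp h
        exact le_of_lt (div_pos_of_neg_of_neg this hlt)
      · exact absurd he h0
      · rw [sign_eq_one_iff.mpr hgt] at h
        have : 0 < δ k := sign_eq_one_iff.mp h
        exact le_of_lt (div_pos this hgt)
    have hwsum : ∑ k, δ k / t = 1 := by
      rw [← Finset.sum_div, ht, div_self h0]
    have hBmem : (∑ k, (δ k / t) • b' k) ∈ s :=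
      hconv.sum_mem (fun k _ => hw k) hwsum (fun k _ => hb's k)
    refine ⟨∑ k, (δ k / t) • b' k, hBmem, ?_⟩
    rw [Finset.sum_mul]
    apply Finset.sum_congr rfl
    intro k _
    by_cases h : δ k = 0
    · simp [h, hb']
    · simp only [hb', if_neg h, smul_eq_mul]
      field_simp
  · -- at most one nonzero step
    have hex : ∃ k, δ k ≠ 0 := by
      by_contra hno
      push_neg at hno
      rw [Finset.sum_eq_zero (fun k _ => hno k)] at ht
      exact h0 ht.symm
    obtain ⟨k0, hk0⟩ := hex
    have hz : ∀ k, k ≠ k0 → δ k = 0 := by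
      intro k hk
      by_contra h
      exact hk (huniq k k0 h hk0)
    have ht' : δ k0 = t := by
      rw [← ht, Finset.sum_eq_single k0 (fun k _ hk => hz k hk) (by simp)]
    refine ⟨b k0, hb k0 hk0, ?_⟩
    rw [Finset.sum_eq_single k0 (fun k _ hk => by rw [hz k hk, mul_zero]) (by simp), ht']

/-- key path lemma -/
lemma key_path {n r : ℕ} (X : Set (Fin n → ℝ)) (D : Matrix (Fin r) (Fin n) (Set ℝ))
    (hD : ∀ i j, (D i j).Nonempty)
    (hX : Rectangular X ∨ (RectOrientedConnected X ∧ ∀ i j, Convex ℝ (D i j)))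
    (G : (Fin n → ℝ) → (Fin r → ℝ)) (hG : CompAffine X D G)
    (x : Fin n → ℝ) (hx : x ∈ X) (y : Fin n → ℝ) (hy : y ∈ X) :
    ∃ B ∈ Qual D, G x - G y = B.mulVec (x - y) := by
  -- obtain path data
  obtain ⟨N, z, jdx, hz0, hzl, hzX, hstep, hsign, hcase⟩ :
      ∃ (N : ℕ) (z : Fin (N + 1) → (Fin n → ℝ)) (jdx : Fin N → Fin n),
        z 0 = y ∧ z (Fin.last N) = x ∧ (∀ k, z k ∈ X) ∧
        (∀ k : Fin N, ∀ j', j' ≠ jdx k → z k.succ j' = z k.castSucc j') ∧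
        (∀ k : Fin N, ∀ j, z k.succ j - z k.castSucc j = 0 ∨
          SignType.sign (z k.succ j - z k.castSucc j) = SignType.sign (x j - y j)) ∧
        ((∀ i j, Convex ℝ (D i j)) ∨
          (∀ j', ∀ k l : Fin N, z k.succ j' - z k.castSucc j' ≠ 0 →
            z l.succ j' - z l.castSucc j' ≠ 0 → k = l)) := by
    rcases hX with ⟨I, hI, hXI⟩ | ⟨hconn, hconv⟩
    · -- rectangular: concrete path
      refine ⟨n, rpath x y, id, rpath_zero x y, rpath_last x y, ?_, ?_, ?_, ?_⟩
      · intro k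
        have hx' : x ∈ Set.pi Set.univ I := hXI ▸ hx
        have hy' : y ∈ Set.pi Set.univ I := hXI ▸ hy
        rw [hXI]
        intro j _
        unfold rpath
        split_ifs
        · exact hx' j trivial
        · exact hy' j trivial
      · intro k j' hj'
        exact rpath_step x y k j' hj'
      · intro k j
        by_cases h : j = k
        · subst h
          rw [rpath_succ_self, rpath_castSucc_self]
          right; rfl
        · left; rw [rpath_step x y k j h]; ring
      · right
        intro j' k l hk hl
        have h1 : j' = k := by
          by_contra h
          exact hk (by rw [rpath_step x y k j' h]; ring)
        have h2 : j' = l := by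
          by_contra h
          exact hl (by rw [rpath_step x y l j' h]; ring)
        rw [← h1, ← h2]
    · -- connected case
      obtain ⟨N, z, hz0, hzl, hzX, hstep, hsign⟩ := hconn x hx y hy
      choose jdx hjne hjeq using hstep
      exact ⟨N, z, jdx, hz0, hzl, hzX, hjeq, hsign, Or.inl hconv⟩
  -- per-step coefficients from component-wise affinity
  have hb : ∀ (i : Fin r) (k : Fin N), ∃ b ∈ D i (jdx k),
      G (z k.succ) i - G (z k.castSucc) i = b * (z k.succ (jdx k) - z k.castSucc (jdx k)) :=
    fun i k => hG i (jdx k) (z k.succ) (hzX _) (z k.castSucc) (hzX _) (hstep k)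
  choose b hbmem hbeq using hb
  -- per-coordinate telescoping
  have htel : ∀ j : Fin n, ∑ k : Fin N, (z k.succ j - z k.castSucc j) = x j - y j := by
    intro j
    rw [fin_telescope (fun k => z k j), hzl, hz0]
  -- aggregate per (i,j)
  have hB : ∀ (i : Fin r) (j : Fin n), ∃ B ∈ D i j,
      ∑ k : Fin N, b i k * (z k.succ j - z k.castSucc j) = B * (x j - y j) := by
    intro i j
    apply agg (D i j) (hD i j) (b i) (fun k => z k.succ j - z k.castSucc j)
      ?_ _ (htel j) (fun k => hsign k j) ?_
    · intro k hk
      have hj : j = jdx k := by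
        by_contra h
        exact hk (by show z k.succ j - z k.castSucc j = 0; rw [hstep k j h]; ring)
      exact hj ▸ hbmem i k
    · rcases hcase with h | h
      · exact Or.inl (h i j)
      · exact Or.inr (h j)
  choose B hBmem hBeq using hB
  refine ⟨Matrix.of B, hBmem, ?_⟩
  funext i
  have lhs : (G x - G y) i = ∑ k : Fin N, (G (z k.succ) i - G (z k.castSucc) i) := by
    rw [fin_telescope (fun k => G (z k) i), hzl, hz0]; rfl
  have rhs : (Matrix.of B).mulVec (x - y) i
      = ∑ j : Fin n, B i j * (x j - y j) := by
    simp [Matrix.mulVec, dotProduct, Pi.sub_apply]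
  have hrow : ∀ k : Fin N, ∑ j : Fin n, b i k * (z k.succ j - z k.castSucc j)
      = b i k * (z k.succ (jdx k) - z k.castSucc (jdx k)) := by
    intro k
    refine Finset.sum_eq_single (jdx k) ?_ ?_
    · intro j _ hj; rw [hstep k j hj]; ring
    · intro h; exact absurd (Finset.mem_univ _) h
  rw [lhs, rhs]
  calc ∑ k : Fin N, (G (z k.succ) i - G (z k.castSucc) i)
      = ∑ k : Fin N, b i k * (z k.succ (jdx k) - z k.castSucc (jdx k)) :=
        Finset.sum_congr rfl (fun k _ => hbeq i k)
    _ = ∑ k : Fin N, ∑ j : Fin n, b i k * (z k.succ j - z k.castSucc j) :=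
        Finset.sum_congr rfl (fun k _ => (hrow k).symm)
    _ = ∑ j : Fin n, ∑ k : Fin N, b i k * (z k.succ j - z k.castSucc j) := Finset.sum_comm
    _ = ∑ j : Fin n, B i j * (x j - y j) :=
        Finset.sum_congr rfl (fun j _ => hBeq i j)

/-- Let `ℳ(D)` be the set of component-wise `D`-affine maps on `X`. If `X` is rectangular,
or `X` is connected by rectangular, oriented paths and every entry of `D` is an interval,
then `ℳ(D)` is `Q(D)`-affine, every matrix of `Q(D)` (restricted to `X`) belongs to
`ℳ(D)`, `Δ_S ℳ(D) = Q(D)(dX ∩ S)`, and `ℳ(D)` is injective w.r.t. `S` iff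
`0 ∉ Q(D)(dX ∩ S)`. -/
theorem stmt10 {n r : ℕ} (X : Set (Fin n → ℝ)) (S : Submodule ℝ (Fin n → ℝ))
    (D : Matrix (Fin r) (Fin n) (Set ℝ)) (hD : ∀ i j, (D i j).Nonempty)
    (hX : Rectangular X ∨ (RectOrientedConnected X ∧ ∀ i j, Convex ℝ (D i j))) :
    (∀ G ∈ {G | CompAffine X D G}, IsAffine X (Qual D) G) ∧
    (∀ B ∈ Qual D, (fun x => B.mulVec x) ∈ {G | CompAffine X D G}) ∧
    DeltaS X S {G | CompAffine X D G} = matImage (Qual D) (dSet X ∩ (S : Set (Fin n → ℝ))) ∧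
    (InjOnCosets X S {G | CompAffine X D G} ↔
      (0 : Fin r → ℝ) ∉ matImage (Qual D) (dSet X ∩ (S : Set (Fin n → ℝ)))) := by
  have part1 : ∀ G ∈ {G | CompAffine X D G}, IsAffine X (Qual D) G := by
    intro G hG x hx y hy
    exact key_path X D hD hX G hG x hx y hy
  have part2 : ∀ B ∈ Qual D, (fun x => B.mulVec x) ∈ {G | CompAffine X D G} := by
    intro B hB
    intro i j x hx y hy hxy
    refine ⟨B i j, hB i j, ?_⟩
    simp only [Matrix.mulVec, dotProduct]
    rw [← Finset.sum_sub_distrib]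
    rw [Finset.sum_eq_single j]
    · ring
    · intro j' _ hj'
      rw [hxy j' hj']; ring
    · simp
  have part3 : DeltaS X S {G | CompAffine X D G}
      = matImage (Qual D) (dSet X ∩ (S : Set (Fin n → ℝ))) := by
    ext w
    constructor
    · rintro ⟨G, hG, x, hx, y, hy, hS, hne, rfl⟩
      obtain ⟨B, hB, hBeq⟩ := key_path X D hD hX G hG x hx y hy
      exact ⟨B, hB, x - y, ⟨⟨x, hx, y, hy, fun h => hne (by rw [h]; simp), rfl⟩, hS⟩, hBeq⟩
    · rintro ⟨B, hB, z, ⟨⟨x, hx, y, hy, hne, rfl⟩, hS⟩, rfl⟩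
      refine ⟨fun v => B.mulVec v, part2 B hB, x, hx, y, hy, hS, ?_, ?_⟩
      · intro h; exact hne (by simpa [sub_eq_zero] using h)
      · rw [← Matrix.mulVec_sub]
  have part4 : InjOnCosets X S {G | CompAffine X D G} ↔
      (0 : Fin r → ℝ) ∉ matImage (Qual D) (dSet X ∩ (S : Set (Fin n → ℝ))) := by
    constructor
    · intro hinj hmem
      obtain ⟨B, hB, z, ⟨⟨x, hx, y, hy, hne, rfl⟩, hS⟩, heq⟩ := hmem
      have hG : (fun v => B.mulVec v) ∈ {G | CompAffine X D G} := part2 B hB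
      have hxS : x ∈ {v | v - y ∈ S} ∩ X := ⟨hS, hx⟩
      have hyS : y ∈ {v | v - y ∈ S} ∩ X := ⟨by simp, hy⟩
      apply hne
      apply hinj _ hG y hy hxS hyS
      have hz : B.mulVec x - B.mulVec y = 0 := by rw [← Matrix.mulVec_sub, ← heq]
      have := sub_eq_zero.mp hz
      simpa using this
    · intro h0 G hG x₀ hx₀ u hu v hv huv
      by_contra hne
      apply h0
      rw [← part3]
      refine ⟨G, hG, u, hu.2, v, hv.2, ?_, ?_, by rw [huv]; simp⟩
      · have := S.sub_mem hu.1 hv.1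
        simpa using this
      · intro h; exact hne (by rwa [sub_eq_zero] at h)
  exact ⟨part1, part2, part3, part4⟩
end

section
/- Let 𝒲 = (w_{ij}) ∈ 𝒮^{r×n}, x ∈ ℝⁿ, and y ∈ ℝʳ. The following are equivalent: (i) there exists B ∈ Q(𝒲) such that y = Bx; (ii) for every i ∈ [r]: if y_i ≠ 0, then sign(y_i) = s · sign(x_j) for some j ∈ [n] and some s ∈ w_{ij}; and if y_i = 0, then w_{i*} · σ(x) = 0, i.e. there exists a sign vector τ ∈ {−,0,+}ⁿ with τ_j ∈ w_{ij} for all j such that τ is orthogonal to σ(x). -/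
/-!
Row by row, `yᵢ = ∑ⱼ bᵢⱼ xⱼ` with `sign bᵢⱼ ∈ wᵢⱼ`. Once the sign pattern `τ` of the row is fixed,
the attainable values of `yᵢ` are exactly the positive combinations `∑ⱼ aⱼ (τⱼ xⱼ)`, `aⱼ > 0`.
A nonzero `c` is such a combination as soon as one term `τⱼ xⱼ` has the sign of `c`: scale the
other coefficients down and solve for that one. The value `0` is attained exactly when all terms
vanish or terms of both signs occur, i.e. when `τ` is orthogonal to `σ(x)`.
-/

/-- Two sign vectors `τ, ρ` are orthogonal (`τ · ρ = 0`): either `τᵢ ρᵢ = 0` for all `i`,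
or there exist `i, j` with `τᵢ ρᵢ = -` and `τⱼ ρⱼ = +`. -/
def sOrth {n : ℕ} (τ ρ : Fin n → SignType) : Prop :=
  (∀ i, τ i * ρ i = 0) ∨ (∃ i j, τ i * ρ i = -1 ∧ τ j * ρ j = 1)

section SignedSums

variable {ι : Type*} [Fintype ι]

lemma sign_coe_signType {α : Type*} [Ring α] [LinearOrder α] [IsStrictOrderedRing α]
    (s : SignType) : SignType.sign (s : α) = s := by
  cases s <;> simp

lemma exists_sign_eq_sign_sum {u : ι → ℝ} (h : ∑ j, u j ≠ 0) :
    ∃ j, SignType.sign (u j) = SignType.sign (∑ j, u j) := by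
  rcases h.lt_or_gt with hneg | hpos
  · obtain ⟨j, -, hj⟩ := Finset.exists_lt_of_sum_lt (g := fun _ => (0 : ℝ)) (by simpa using hneg)
    exact ⟨j, by rw [sign_neg hj, sign_neg hneg]⟩
  · obtain ⟨j, -, hj⟩ := Finset.exists_lt_of_sum_lt (f := fun _ => (0 : ℝ)) (by simpa using hpos)
    exact ⟨j, by rw [sign_pos hj, sign_pos hpos]⟩

lemma forall_eq_zero_or_exists_neg_pos_of_sum_eq_zero {u : ι → ℝ} (h : ∑ j, u j = 0) :
    (∀ j, u j = 0) ∨ ∃ p q, u p < 0 ∧ 0 < u q := by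
  refine or_iff_not_imp_left.2 fun hne => ?_
  obtain ⟨p, hp⟩ := not_forall.1 hne
  obtain ⟨q, -, hq⟩ :=
    Finset.exists_pos_of_sum_zero_of_exists_nonzero u h ⟨p, Finset.mem_univ p, hp⟩
  obtain ⟨p', -, hp'⟩ := Finset.exists_pos_of_sum_zero_of_exists_nonzero (-u)
    (by simp [Finset.sum_neg_distrib, h]) ⟨p, Finset.mem_univ p, neg_ne_zero.2 hp⟩
  exact ⟨p', q, neg_pos.1 hp', hq⟩

end SignedSums

section PosCombination

variable {ι : Type*} [Fintype ι]

def IsPosCombination (u : ι → ℝ) (c : ℝ) : Prop :=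
  ∃ a : ι → ℝ, (∀ j, 0 < a j) ∧ ∑ j, a j * u j = c

lemma isPosCombination_smul_sum (u : ι → ℝ) {t : ℝ} (ht : 0 < t) :
    IsPosCombination u (t * ∑ j, u j) :=
  ⟨fun _ => t, fun _ => ht, by rw [Finset.mul_sum]⟩

lemma IsPosCombination.add_smul [DecidableEq ι] {u : ι → ℝ} {c : ℝ} (h : IsPosCombination u c)
    (q : ι) {t : ℝ} (ht : 0 ≤ t) : IsPosCombination u (c + t * u q) := by
  obtain ⟨a, ha, rfl⟩ := h
  refine ⟨a + Pi.single q t, fun j => ?_, ?_⟩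
  · by_cases hj : j = q
    · subst hj; simpa using add_pos_of_pos_of_nonneg (ha j) ht
    · simpa [hj] using ha j
  · simp [add_mul, Finset.sum_add_distrib, Pi.single_apply]

lemma IsPosCombination.neg {u : ι → ℝ} {c : ℝ} (h : IsPosCombination u c) :
    IsPosCombination (-u) (-c) := by
  obtain ⟨a, ha, rfl⟩ := h
  exact ⟨a, ha, by simp [Finset.sum_neg_distrib]⟩

/-- Scale all coefficients `1` down until the sum lies below `c`, then raise the coefficient
of the positive term `u q`. -/
lemma isPosCombination_of_pos {u : ι → ℝ} {q : ι} (hq : 0 < u q) {c : ℝ} (hc : 0 < c) :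
    IsPosCombination u c := by
  classical
  set T := ∑ j, u j
  set t := c / (|T| + 1)
  have ht : 0 < t := by positivity
  have htT : t * T ≤ c := by
    calc t * T ≤ t * (|T| + 1) := by gcongr; linarith [le_abs_self T]
      _ = c := div_mul_cancel₀ c (by positivity)
  have h := (isPosCombination_smul_sum u ht).add_smul q
    (div_nonneg (sub_nonneg.2 htT) hq.le : 0 ≤ (c - t * T) / u q)
  rwa [div_mul_cancel₀ _ hq.ne', add_sub_cancel] at h

lemma isPosCombination_of_neg {u : ι → ℝ} {p : ι} (hp : u p < 0) {c : ℝ} (hc : c < 0) :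
    IsPosCombination u c := by
  simpa using (isPosCombination_of_pos (u := -u) (neg_pos.2 hp) (neg_pos.2 hc)).neg

lemma isPosCombination_of_sign_eq {u : ι → ℝ} {q : ι} {c : ℝ} (hc : c ≠ 0)
    (h : SignType.sign c = SignType.sign (u q)) : IsPosCombination u c := by
  rcases hc.lt_or_gt with hneg | hpos
  · rw [sign_neg hneg, eq_comm, sign_eq_neg_one_iff] at h
    exact isPosCombination_of_neg h hneg
  · rw [sign_pos hpos, eq_comm, sign_eq_one_iff] at h
    exact isPosCombination_of_pos h hpos

lemma isPosCombination_zero {u : ι → ℝ} (h : (∀ j, u j = 0) ∨ ∃ p q, u p < 0 ∧ 0 < u q) :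
    IsPosCombination u 0 := by
  classical
  rcases h with hzero | ⟨p, q, hp, hq⟩
  · simpa [hzero] using isPosCombination_smul_sum u one_pos
  · have h := (isPosCombination_of_pos hq one_pos).add_smul p (inv_nonneg.2 (neg_nonneg.2 hp.le))
    rwa [inv_mul_eq_div, div_neg, div_self hp.ne, add_neg_cancel] at h

end PosCombination

lemma sOrth_sign_iff {n : ℕ} (b x : Fin n → ℝ) :
    sOrth (fun j => SignType.sign (b j)) (fun j => SignType.sign (x j)) ↔
      (∀ j, b j * x j = 0) ∨ ∃ p q, b p * x p < 0 ∧ 0 < b q * x q := by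
  simp only [sOrth, ← sign_mul, sign_eq_zero_iff, sign_eq_neg_one_iff, sign_eq_one_iff]

lemma exists_sign_mem_of_isPosCombination {n : ℕ} {w : Fin n → Set SignType} {x : Fin n → ℝ}
    {c : ℝ} {τ : Fin n → SignType} (hτ : ∀ j, τ j ∈ w j)
    (h : IsPosCombination (fun j => (τ j : ℝ) * x j) c) :
    ∃ b : Fin n → ℝ, (∀ j, SignType.sign (b j) ∈ w j) ∧ c = b ⬝ᵥ x := by
  obtain ⟨a, ha, rfl⟩ := h
  refine ⟨fun j => a j * τ j, fun j => ?_, ?_⟩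
  · rw [sign_mul, sign_pos (ha j), one_mul, sign_coe_signType]
    exact hτ j
  · simp only [dotProduct, mul_assoc]

theorem exists_sign_mem_dotProduct_eq_iff {n : ℕ} {w : Fin n → Set SignType}
    (hw : ∀ j, (w j).Nonempty) (x : Fin n → ℝ) (c : ℝ) :
    (∃ b : Fin n → ℝ, (∀ j, SignType.sign (b j) ∈ w j) ∧ c = b ⬝ᵥ x) ↔
      (c ≠ 0 → ∃ j, ∃ s ∈ w j, SignType.sign c = s * SignType.sign (x j)) ∧
      (c = 0 → ∃ τ : Fin n → SignType, (∀ j, τ j ∈ w j) ∧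
        sOrth τ (fun j => SignType.sign (x j))) := by
  constructor
  · rintro ⟨b, hb, rfl⟩
    refine ⟨fun hc => ?_, fun hc => ⟨_, hb, ?_⟩⟩
    · obtain ⟨j, hj⟩ := exists_sign_eq_sign_sum hc
      exact ⟨j, _, hb j, by rw [← sign_mul, hj]; rfl⟩
    · exact (sOrth_sign_iff b x).2 (forall_eq_zero_or_exists_neg_pos_of_sum_eq_zero hc)
  · rintro ⟨hne, hzero⟩
    by_cases hc : c = 0
    · obtain ⟨τ, hτ, horth⟩ := hzero hc
      have horth' := (sOrth_sign_iff (fun j => (τ j : ℝ)) x).1 (by simpa [sign_coe_signType])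
      exact exists_sign_mem_of_isPosCombination hτ (hc ▸ isPosCombination_zero horth')
    · obtain ⟨j₀, s, hs, hsign⟩ := hne hc
      choose t ht using hw
      classical
      refine exists_sign_mem_of_isPosCombination (τ := Function.update t j₀ s) (fun j => ?_)
        (isPosCombination_of_sign_eq (q := j₀) hc ?_)
      · by_cases hj : j = j₀
        · subst hj; simpa using hs
        · simpa [hj] using ht j
      · simp [sign_mul, sign_coe_signType, hsign]

/-- Characterization of the pairs `(x, y)` with `y = B x` for some matrix `B` in the
qualitative class `Q(𝒲)` of a matrix `𝒲` of non-empty sets of signs. -/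
theorem stmt17 {n r : ℕ} (𝒲 : Matrix (Fin r) (Fin n) (Set SignType))
    (h𝒲 : ∀ i j, (𝒲 i j).Nonempty) (x : Fin n → ℝ) (y : Fin r → ℝ) :
    (∃ B : Matrix (Fin r) (Fin n) ℝ,
        (∀ i j, SignType.sign (B i j) ∈ 𝒲 i j) ∧ y = B.mulVec x) ↔
    (∀ i : Fin r,
      (y i ≠ 0 → ∃ j : Fin n, ∃ s ∈ 𝒲 i j,
        SignType.sign (y i) = s * SignType.sign (x j)) ∧
      (y i = 0 → ∃ τ : Fin n → SignType, (∀ j, τ j ∈ 𝒲 i j) ∧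
        sOrth τ (fun j => SignType.sign (x j)))) := by
  calc (∃ B : Matrix (Fin r) (Fin n) ℝ,
          (∀ i j, SignType.sign (B i j) ∈ 𝒲 i j) ∧ y = B.mulVec x)
      ↔ ∀ i, ∃ b : Fin n → ℝ, (∀ j, SignType.sign (b j) ∈ 𝒲 i j) ∧ y i = b ⬝ᵥ x := by
        simp only [Classical.skolem (p := fun i b => _ ∧ y i = b ⬝ᵥ x), forall_and, funext_iff,
          Matrix.mulVec]
        rfl
    _ ↔ _ := forall_congr' fun i => exists_sign_mem_dotProduct_eq_iff (h𝒲 i) x (y i)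
end
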